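/- arXiv:math/0601063 — 6 statements merged into one kernel-verified Lean document; each statement's English description precedes it below -/
import Mathlib

section
/- Let n ≥ 2, s ≥ 1 and n₁, …, n_s ≥ 2 be integers, and let g ≥ 3 be an integer such that 2 = (g − 1)·Σ_{j=1}^{s}(1 − 1/n_j). Then exactly one of the following holds: (a) g = 3 and (n₁,…,n_s) = (2,2); (b) g = 4 and (n₁,…,n_s) = (3); (c) g = 5 and (n₁,…,n_s) = (2). -/
lemma term_lb {m : ℕ} (hm : 2 ≤ m) : (1:ℚ)/2 ≤ 1 - 1/(m:ℚ) := by
  have h2 : (2:ℚ) ≤ (m:ℚ) := by exact_mod_cast hm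
  have : 1/(m:ℚ) ≤ 1/2 := by
    apply one_div_le_one_div_of_le <;> linarith
  linarith

lemma solve_one {m : ℕ} (hm : 2 ≤ m) {c : ℚ} (hc : 0 < c)
    (h : (2:ℚ) = c * (1 - 1/(m:ℚ))) : (m:ℚ) * (c - 2) = c := by
  have hm0 : (0:ℚ) < (m:ℚ) := by positivity
  field_simp at h
  nlinarith [h]

/-- Solutions of `2 = (g-1)·Σ(1 - 1/nⱼ)` with `g ≥ 3`, `s ≥ 1`, `nⱼ ≥ 2`:
exactly the cases `(g, n) = (3, (2,2))`, `(4, (3))`, `(5, (2))`. -/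
theorem stmt_3 (s : ℕ) (hs : 1 ≤ s) (n : Fin s → ℕ) (hn : ∀ j, 2 ≤ n j)
    (g : ℕ) (hg : 3 ≤ g)
    (heq : (2 : ℚ) = ((g : ℚ) - 1) * ∑ j, (1 - 1 / (n j : ℚ))) :
    (g = 3 ∧ s = 2 ∧ ∀ j, n j = 2) ∨
    (g = 4 ∧ s = 1 ∧ ∀ j, n j = 3) ∨
    (g = 5 ∧ s = 1 ∧ ∀ j, n j = 2) := by
  set T : ℚ := ∑ j, (1 - 1 / (n j : ℚ)) with hT
  have hTlb : (s:ℚ)/2 ≤ T := by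
    have : ∑ j : Fin s, (1:ℚ)/2 ≤ T := by
      apply Finset.sum_le_sum
      intro j _
      exact term_lb (hn j)
    simpa [Finset.sum_const, div_eq_mul_inv, mul_comm] using this
  have hgQ : (3:ℚ) ≤ (g:ℚ) := by exact_mod_cast hg
  have hsQ : (1:ℚ) ≤ (s:ℚ) := by exact_mod_cast hs
  have hg5 : g ≤ 5 := by
    by_contra h
    have : (6:ℚ) ≤ (g:ℚ) := by exact_mod_cast Nat.le_of_lt_succ (Nat.lt_of_not_le (by omega))
    nlinarith
  have hs2 : s ≤ 2 := by
    by_contra h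
    have : (3:ℚ) ≤ (s:ℚ) := by exact_mod_cast (by omega : 3 ≤ s)
    nlinarith
  obtain rfl | rfl : s = 1 ∨ s = 2 := by omega
  · -- s = 1
    rw [hT, Fin.sum_univ_one] at heq
    interval_cases g
    · -- g = 3
      exfalso
      have := solve_one (hn 0) (by norm_num : (0:ℚ) < 2) (by push_cast at heq ⊢; linarith)
      norm_num at this
    · -- g = 4
      right; left
      refine ⟨rfl, rfl, ?_⟩
      have h := solve_one (hn 0) (by norm_num : (0:ℚ) < 3) (by push_cast at heq ⊢; linarith)
      have h3 : ((n 0 : ℕ):ℚ) = 3 := by linarith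
      intro j; fin_cases j; exact_mod_cast h3
    · -- g = 5
      right; right
      refine ⟨rfl, rfl, ?_⟩
      have h := solve_one (hn 0) (by norm_num : (0:ℚ) < 4) (by push_cast at heq ⊢; linarith)
      have h2 : ((n 0 : ℕ):ℚ) = 2 := by linarith
      intro j; fin_cases j; exact_mod_cast h2
  · -- s = 2
    rw [hT, Fin.sum_univ_two] at heq
    have h0 := term_lb (hn 0)
    have h1 := term_lb (hn 1)
    interval_cases g
    · -- g = 3
      left
      refine ⟨rfl, rfl, ?_⟩
      push_cast at heq
      have e0 : 1 - 1/((n 0 : ℕ):ℚ) = 1/2 := by linarith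
      have e1 : 1 - 1/((n 1 : ℕ):ℚ) = 1/2 := by linarith
      have c0 : ((n 0 : ℕ):ℚ) = 2 := by
        have hp : (0:ℚ) < ((n 0 : ℕ):ℚ) := by have := hn 0; positivity
        field_simp at e0; linarith
      have c1 : ((n 1 : ℕ):ℚ) = 2 := by
        have hp : (0:ℚ) < ((n 1 : ℕ):ℚ) := by have := hn 1; positivity
        field_simp at e1; linarith
      intro j
      fin_cases j
      · exact_mod_cast c0
      · exact_mod_cast c1
    · -- g = 4
      exfalso; push_cast at heq; nlinarith
    · -- g = 5
      exfalso; push_cast at heq; nlinarith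
end

section
/- Let G be a finite cyclic group of even order 2m, and suppose g₁, …, g_r generate G with g₁ + ⋯ + g_r = 0, and let g be the unique element of order 2 in G. Then g ∈ ⟨gᵢ⟩ for some i; in particular the condition (⋃ᵢ ⟨gᵢ⟩) ∩ ⟨g⟩ = {0} fails. -/
def oddAddSubgroup (G : Type*) [AddCommGroup G] [Finite G] : AddSubgroup G where
  carrier := {x | Odd (addOrderOf x)}
  add_mem' := by
    intro a b ha hb
    simp only [Set.mem_setOf_eq] at ha hb ⊢
    have hd := (AddCommute.all a b).addOrderOf_add_dvd_lcm
    have hodd : Odd (Nat.lcm (addOrderOf a) (addOrderOf b)) := by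
      rw [← Nat.not_even_iff_odd, even_iff_two_dvd] at ha hb ⊢
      intro h2
      rcases (Nat.prime_two.dvd_mul).mp (h2.trans (Nat.lcm_dvd_mul _ _)) with h | h
      · exact ha h
      · exact hb h
    exact hodd.of_dvd_nat hd
  zero_mem' := by show Odd (addOrderOf (0 : G)); simp
  neg_mem' := by intro a ha; show Odd (addOrderOf (-a)); simpa using ha

lemma oddSubgroup_aux (G : Type*) [AddCommGroup G] [Finite G] :
    ∃ H : AddSubgroup G, ∀ x : G, x ∈ H ↔ Odd (addOrderOf x) :=
  ⟨oddAddSubgroup G, fun _ => Iff.rfl⟩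

/-- In a finite cyclic group of even order `2m`, if `g₁, …, g_r` generate the
group and sum to zero, and `g` is the unique element of order 2, then
`g ∈ ⟨gᵢ⟩` for some `i`; in particular `(⋃ᵢ ⟨gᵢ⟩) ∩ ⟨g⟩ = {0}` fails. -/
theorem stmt_12 (G : Type*) [AddCommGroup G] [Finite G] [IsAddCyclic G]
    (m : ℕ) (hm : 1 ≤ m) (hcard : Nat.card G = 2 * m)
    (r : ℕ) (gs : Fin r → G)
    (hgen : AddSubgroup.closure (Set.range gs) = ⊤)
    (hsum : ∑ i, gs i = 0)
    (g : G) (hg : addOrderOf g = 2) :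
    (∃ i, g ∈ AddSubgroup.zmultiples (gs i)) ∧
      ¬ ((⋃ i, (AddSubgroup.zmultiples (gs i) : Set G)) ∩
          (AddSubgroup.zmultiples g : Set G) = {0}) := by
  classical
  have := Fintype.ofFinite G
  have hg0 : g ≠ 0 := by
    intro h; rw [h] at hg; simp at hg
  -- Step 1: some gs i has even order
  obtain ⟨H, hH⟩ := oddSubgroup_aux G
  have hexists : ∃ i, Even (addOrderOf (gs i)) := by
    by_contra hall
    push_neg at hall
    have hsub : AddSubgroup.closure (Set.range gs) ≤ H := by
      rw [AddSubgroup.closure_le]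
      rintro x ⟨i, rfl⟩
      exact (hH _).2 (Nat.not_even_iff_odd.mp (hall i))
    rw [hgen] at hsub
    have : Odd (addOrderOf g) := (hH g).1 (hsub (AddSubgroup.mem_top g))
    rw [hg] at this
    exact (by norm_num : ¬ Odd 2) this
  obtain ⟨i, hi⟩ := hexists
  -- Step 2: construct element of order 2 in zmultiples (gs i)
  obtain ⟨k, hk⟩ := hi
  have hn : addOrderOf (gs i) = 2 * k := by omega
  have hpos : 0 < addOrderOf (gs i) := addOrderOf_pos _
  have hkpos : 0 < k := by omega
  set h : G := k • gs i with hhdef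
  have horder : addOrderOf h = 2 := by
    have hgcd : Nat.gcd (2 * k) k = k := by
      rw [Nat.gcd_comm]; exact Nat.gcd_eq_left ⟨2, by ring⟩
    rw [hhdef, addOrderOf_nsmul, hn, hgcd, Nat.mul_div_cancel 2 hkpos]
  -- Step 3: uniqueness of element of order 2
  have huniq : g = h := by
    by_contra hne
    have h0 : h ≠ 0 := by intro hh; rw [hh] at horder; simp at horder
    have hg2 : (2 : ℕ) • g = 0 := by rw [← hg]; exact addOrderOf_nsmul_eq_zero g
    have hh2 : (2 : ℕ) • h = 0 := by rw [← horder]; exact addOrderOf_nsmul_eq_zero h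
    have hcardle : (Finset.univ.filter (fun a : G => 2 • a = 0)).card ≤ 2 :=
      IsAddCyclic.card_nsmul_eq_zero_le (by norm_num)
    have hsubset : ({0, g, h} : Finset G) ⊆ Finset.univ.filter (fun a => 2 • a = 0) := by
      intro x hx
      simp only [Finset.mem_insert, Finset.mem_singleton] at hx
      rcases hx with rfl | rfl | rfl <;> simp [hg2, hh2]
    have hcard3 : ({0, g, h} : Finset G).card = 3 := by
      rw [Finset.card_insert_of_notMem (by simp [Ne.symm hg0, Ne.symm h0]),
        Finset.card_insert_of_notMem (by simp [hne])]
      simp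
    have := Finset.card_le_card hsubset
    omega
  refine ⟨⟨i, ?_⟩, ?_⟩
  · rw [huniq, hhdef]
    exact ⟨(k : ℤ), by simp⟩
  · intro heq
    have hgmem : g ∈ (⋃ j, (AddSubgroup.zmultiples (gs j) : Set G)) ∩
        (AddSubgroup.zmultiples g : Set G) := by
      constructor
      · exact Set.mem_iUnion.mpr ⟨i, by rw [huniq, hhdef]; exact ⟨(k : ℤ), by simp⟩⟩
      · exact AddSubgroup.mem_zmultiples g
    rw [heq] at hgmem
    exact hg0 hgmem
end

section
/- In G = Z/2 × Z/8, suppose g₁, g₂, g₃ generate G, g₁ + g₂ + g₃ = 0, o(g₁) = 2, o(g₂) = o(g₃) = 8, and no gᵢ equals (1,0). Then g₁ = (1,4), and {g₂, g₃} (as an unordered pair) is one of: {(0,1),(1,3)}, {(1,1),(0,3)}, {(1,7),(0,5)}, {(0,7),(1,5)}. -/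
private lemma aux_no_gen (φ : (ZMod 2 × ZMod 8) →+ ZMod 2) (g₁ g₂ g₃ : ZMod 2 × ZMod 8)
    (hgen : AddSubgroup.closure {g₁, g₂, g₃} = ⊤)
    (e1 : φ g₁ = 0) (e2 : φ g₂ = 0) (e3 : φ g₃ = 0)
    (h : φ (1, 0) ≠ 0) : False := by
  have hle : AddSubgroup.closure {g₁, g₂, g₃} ≤ φ.ker := by
    apply (AddSubgroup.closure_le _).mpr
    intro x hx
    simp only [Set.mem_insert_iff, Set.mem_singleton_iff] at hx
    rcases hx with rfl | rfl | rfl <;> simpa [AddMonoidHom.mem_ker]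
  have : (1, 0) ∈ φ.ker := hle (hgen ▸ AddSubgroup.mem_top _)
  exact h this

private def φ₀ : (ZMod 2 × ZMod 8) →+ ZMod 2 := AddMonoidHom.fst _ _

private def φ₁ : (ZMod 2 × ZMod 8) →+ ZMod 2 :=
  AddMonoidHom.fst _ _ +
    (ZMod.castHom (by norm_num : (2:ℕ) ∣ 8) (ZMod 2)).toAddMonoidHom.comp (AddMonoidHom.snd _ _)

/-- In `G = ℤ/2 × ℤ/8`, if `g₁, g₂, g₃` generate `G`, sum to zero, have orders
`2, 8, 8` respectively, and none equals `(1,0)`, then `g₁ = (1,4)` and the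
unordered pair `{g₂, g₃}` is one of `{(0,1),(1,3)}`, `{(1,1),(0,3)}`,
`{(1,7),(0,5)}`, `{(0,7),(1,5)}`. -/
theorem stmt_14 (g₁ g₂ g₃ : ZMod 2 × ZMod 8)
    (hgen : AddSubgroup.closure {g₁, g₂, g₃} = ⊤)
    (hsum : g₁ + g₂ + g₃ = 0)
    (h₁ : addOrderOf g₁ = 2) (h₂ : addOrderOf g₂ = 8) (h₃ : addOrderOf g₃ = 8)
    (hne₁ : g₁ ≠ (1, 0)) (hne₂ : g₂ ≠ (1, 0)) (hne₃ : g₃ ≠ (1, 0)) :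
    g₁ = (1, 4) ∧
      (({g₂, g₃} : Multiset (ZMod 2 × ZMod 8)) = {(0, 1), (1, 3)} ∨
       ({g₂, g₃} : Multiset (ZMod 2 × ZMod 8)) = {(1, 1), (0, 3)} ∨
       ({g₂, g₃} : Multiset (ZMod 2 × ZMod 8)) = {(1, 7), (0, 5)} ∨
       ({g₂, g₃} : Multiset (ZMod 2 × ZMod 8)) = {(0, 7), (1, 5)}) := by
  have key1 : ∀ g : ZMod 2 × ZMod 8, 2 • g = 0 → g ≠ 0 → g ≠ (1, 0) →
      g = (0, 4) ∨ g = (1, 4) := by decide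
  have key2 : ∀ g : ZMod 2 × ZMod 8, ¬ (4 • g = 0) →
      g = (0,1) ∨ g = (0,3) ∨ g = (0,5) ∨ g = (0,7) ∨
      g = (1,1) ∨ g = (1,3) ∨ g = (1,5) ∨ g = (1,7) := by decide
  have h1s : 2 • g₁ = 0 := addOrderOf_dvd_iff_nsmul_eq_zero.mp (by simp [h₁])
  have h1ne : g₁ ≠ 0 := by
    intro h0; rw [h0, addOrderOf_zero] at h₁; exact absurd h₁ (by norm_num)
  have h2s : ¬ (4 • g₂ = 0) := by
    intro h
    have := addOrderOf_dvd_iff_nsmul_eq_zero.mpr h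
    rw [h₂] at this
    omega
  have hg1 := key1 g₁ h1s h1ne hne₁
  have hg2 := key2 g₂ h2s
  have hg3 : g₃ = -(g₁ + g₂) := by
    have := hsum; linear_combination (norm := abel) hsum
  rcases hg1 with rfl | rfl <;>
    rcases hg2 with rfl | rfl | rfl | rfl | rfl | rfl | rfl | rfl <;>
      subst hg3 <;>
        first
          | exact absurd rfl hne₁
          | (refine ⟨rfl, ?_⟩; decide)
          | exact (aux_no_gen φ₀ _ _ _ hgen (by decide) (by decide) (by decide) (by decide)).elim
          | exact (aux_no_gen φ₁ _ _ _ hgen (by decide) (by decide) (by decide) (by decide)).elim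
end

section
/- In the symmetric group S₃, the elements g₁ = g₂ = (12), g₃ = g₄ = (13), g₅ = g₆ = (23) generate S₃ and satisfy g₁g₂g₃g₄g₅g₆ = 1; the elements h₁ = (12), h₂ = (123), ℓ₁ = (132) satisfy ℓ₁[h₁,h₂] = 1 and generate S₃; and the union of all conjugates of the subgroups ⟨gᵢ⟩ intersects the union of all conjugates of ⟨ℓ₁⟩ trivially (i.e., only in the identity). -/
open Equiv
open scoped commutatorElement

/-! Every `gᵢ` and `h₁` is a transposition and `ℓ₁, h₂` are 3-cycles, so all the generation claims
follow from the transpositions generating `Sₙ`, and from a full cycle together with a transposition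
generating `Sₚ` for `p` prime. An element lying in a cyclic subgroup generated by a conjugate of a
transposition and in one generated by a conjugate of a 3-cycle has order dividing both `2` and `3`,
hence is trivial. -/

theorem eq_one_of_mem_zpowers_conj_of_coprime {G : Type*} [Group G] {a b k l x : G}
    (hab : (orderOf a).Coprime (orderOf b))
    (ha : x ∈ Subgroup.zpowers (k * a * k⁻¹)) (hb : x ∈ Subgroup.zpowers (l * b * l⁻¹)) :
    x = 1 := by
  have hxa : orderOf x ∣ orderOf a := by
    simpa only [← (SemiconjBy.conj_mk k a).orderOf_eq k] using orderOf_dvd_of_mem_zpowers ha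
  have hxb : orderOf x ∣ orderOf b := by
    simpa only [← (SemiconjBy.conj_mk l b).orderOf_eq l] using orderOf_dvd_of_mem_zpowers hb
  exact orderOf_eq_one_iff.mp (Nat.eq_one_of_dvd_coprimes hab hxa hxb)

namespace Equiv.Perm

theorem setOf_isSwap_fin_three :
    {σ : Perm (Fin 3) | σ.IsSwap} = {c[0, 1], c[0, 2], c[1, 2]} := by
  simp only [Set.ext_iff, Set.mem_ofPred_eq, Set.mem_insert_iff, Set.mem_singleton_iff, IsSwap]
  decide

theorem closure_threeCycle_swap_fin_three :
    Subgroup.closure ({c[0, 1, 2], c[0, 1]} : Set (Perm (Fin 3))) = ⊤ :=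
  closure_prime_cycle_swap (by norm_num) (card_support_eq_three_iff.mp (by decide)).isCycle
    (by decide) ⟨0, 1, by decide, rfl⟩

end Equiv.Perm

/-- Building data for the example `G = S₃`, `g(C) = 3`, `g(F) = 4`:
with `g₁ = g₂ = (12)`, `g₃ = g₄ = (13)`, `g₅ = g₆ = (23)` (0-indexed),
`h₁ = (12)`, `h₂ = (123)`, `ℓ₁ = (132)`, the `gᵢ` generate `S₃` and have
product 1; `ℓ₁ ⁅h₁,h₂⁆ = 1` and `ℓ₁, h₁, h₂` generate `S₃`; and the union of
all conjugates of the `⟨gᵢ⟩` meets the union of all conjugates of `⟨ℓ₁⟩` only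
in the identity. -/
theorem stmt_15 :
    let g₁ : Perm (Fin 3) := c[0, 1]
    let g₃ : Perm (Fin 3) := c[0, 2]
    let g₅ : Perm (Fin 3) := c[1, 2]
    let h₁ : Perm (Fin 3) := c[0, 1]
    let h₂ : Perm (Fin 3) := c[0, 1, 2]
    let ℓ₁ : Perm (Fin 3) := c[0, 2, 1]
    Subgroup.closure ({g₁, g₃, g₅} : Set (Perm (Fin 3))) = ⊤ ∧
    g₁ * g₁ * g₃ * g₃ * g₅ * g₅ = 1 ∧
    ℓ₁ * ⁅h₁, h₂⁆ = 1 ∧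
    Subgroup.closure ({ℓ₁, h₁, h₂} : Set (Perm (Fin 3))) = ⊤ ∧
    ∀ x : Perm (Fin 3),
      (∃ (k : Perm (Fin 3)) (g : Perm (Fin 3)), g ∈ ({g₁, g₃, g₅} : Set (Perm (Fin 3))) ∧
        x ∈ Subgroup.zpowers (k * g * k⁻¹)) →
      (∃ k : Perm (Fin 3), x ∈ Subgroup.zpowers (k * ℓ₁ * k⁻¹)) →
      x = 1 := by
  intro g₁ g₃ g₅ h₁ h₂ ℓ₁
  refine ⟨Perm.setOf_isSwap_fin_three ▸ Perm.closure_isSwap, by decide, by decide, ?_, ?_⟩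
  · refine eq_top_mono (Subgroup.closure_mono ?_) Perm.closure_threeCycle_swap_fin_three
    exact Set.pair_subset (.inr (.inr rfl)) (.inr (.inl rfl))
  · rintro x ⟨k, g, hg, hx⟩ ⟨l, hl⟩
    rw [← Perm.setOf_isSwap_fin_three] at hg
    have hℓ₁ : ℓ₁.IsThreeCycle := card_support_eq_three_iff.mp (by decide)
    refine eq_one_of_mem_zpowers_conj_of_coprime ?_ hx hl
    rw [hg.orderOf, hℓ₁.orderOf]
    norm_num
end

section
/- In the alternating group A₅, the elements g₁ = (24)(35), g₂ = (13452), g₃ = (12345) satisfy g₁g₂g₃ = 1 and generate A₅; and the elements h₁ = (345), h₂ = (15432), ℓ₁ = (235) satisfy ℓ₁[h₁,h₂] = 1 and generate A₅. Moreover, the set of all conjugates of elements of ⟨g₁⟩ ∪ ⟨g₂⟩ ∪ ⟨g₃⟩ intersects the set of all conjugates of elements of ⟨ℓ₁⟩ only in the identity. -/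
/-!
A subgroup of `A₅` of order greater than `12` has index at most `4`, so the action of `A₅` on its
cosets has a nontrivial kernel (`60 ∤ 4!`); simplicity of `A₅` then forces the subgroup to be all
of `A₅`. Each generating triple yields an element of order `3` and one of order `5`, hence a
subgroup of order divisible by `15`. For freeness, conjugates of powers of `g₁, g₂, g₃` have order
dividing `10` and conjugates of powers of `ℓ₁` have order dividing `3`.
-/

set_option maxRecDepth 10000

open Equiv Nat
open scoped commutatorElement

namespace Subgroup

variable {G : Type*} [Group G]

theorem index_normalCore_dvd_factorial (H : Subgroup G) [H.FiniteIndex] :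
    H.normalCore.index ∣ H.index ! := by
  rw [normalCore_eq_ker, index_ker, index_eq_card, ← Nat.card_perm]
  exact card_subgroup_dvd_card (MulAction.toPermHom G (G ⧸ H)).range

theorem eq_top_of_not_card_dvd_factorial_index [Finite G] [IsSimpleGroup G] {H : Subgroup G}
    (h : ¬ Nat.card G ∣ H.index !) : H = ⊤ := by
  rcases H.normalCore_normal.eq_bot_or_eq_top with hcore | hcore
  · rw [← index_bot, ← hcore] at h
    exact absurd H.index_normalCore_dvd_factorial h
  · exact top_le_iff.mp (hcore ▸ H.normalCore_le)

theorem eq_one_of_mem_zpowers_of_pow_eq_one_of_coprime {x a b : G} {m n : ℕ}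
    (ha : a ^ m = 1) (hb : b ^ n = 1) (hmn : m.Coprime n)
    (hxa : x ∈ zpowers a) (hxb : x ∈ zpowers b) : x = 1 :=
  orderOf_eq_one_iff.mp <| Nat.eq_one_of_dvd_coprimes hmn
    ((orderOf_dvd_of_mem_zpowers hxa).trans (orderOf_dvd_of_pow_eq_one ha))
    ((orderOf_dvd_of_mem_zpowers hxb).trans (orderOf_dvd_of_pow_eq_one hb))

end Subgroup

namespace Equiv.Perm

open Subgroup

theorem eq_alternatingGroup_five_of_lt_card {H : Subgroup (Perm (Fin 5))}
    (hH : H ≤ alternatingGroup (Fin 5)) (hcard : 12 < Nat.card H) :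
    H = alternatingGroup (Fin 5) := by
  set K := H.subgroupOf (alternatingGroup (Fin 5))
  have hK : Nat.card K = Nat.card H := Nat.card_congr (subgroupOfEquivOfLe hH).toEquiv
  have hA : Nat.card (alternatingGroup (Fin 5)) = 60 := by
    rw [nat_card_alternatingGroup, Nat.card_fin]; rfl
  have hindex : K.index * Nat.card H = 60 := hK ▸ hA ▸ K.index_mul_card
  have hle : K.index ≤ 4 := by nlinarith
  have hndvd : ¬ Nat.card (alternatingGroup (Fin 5)) ∣ K.index ! := by
    rw [hA]
    exact Nat.not_dvd_of_pos_of_lt K.index.factorial_pos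
      ((Nat.factorial_le hle).trans_lt (by decide))
  exact le_antisymm hH (subgroupOf_eq_top.mp (eq_top_of_not_card_dvd_factorial_index hndvd))

theorem closure_eq_alternatingGroup_five {s : Set (Perm (Fin 5))}
    (hs : s ⊆ alternatingGroup (Fin 5)) {x y : Perm (Fin 5)} (hx : x ∈ closure s)
    (hy : y ∈ closure s) (hx3 : orderOf x = 3) (hy5 : orderOf y = 5) :
    closure s = alternatingGroup (Fin 5) := by
  refine eq_alternatingGroup_five_of_lt_card ((closure_le _).mpr hs) ?_
  have h15 : 15 ∣ Nat.card (closure s) :=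
    Nat.Coprime.mul_dvd_of_dvd_of_dvd (by decide)
      (hx3 ▸ (closure s).orderOf_dvd_natCard hx) (hy5 ▸ (closure s).orderOf_dvd_natCard hy)
  have := Nat.le_of_dvd Nat.card_pos h15
  omega

end Equiv.Perm

open Equiv.Perm Subgroup in
/-- Building data for the example `G = A₅`, `g(C) = 21`, `g(F) = 4` (all
permutations written 0-indexed): `g₁ = (24)(35)`, `g₂ = (13452)`,
`g₃ = (12345)` satisfy `g₁g₂g₃ = 1` and generate `A₅`; `h₁ = (345)`,
`h₂ = (15432)`, `ℓ₁ = (235)` satisfy `ℓ₁ ⁅h₁,h₂⁆ = 1` and generate `A₅`; and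
the conjugates (by elements of `A₅`) of elements of `⟨g₁⟩ ∪ ⟨g₂⟩ ∪ ⟨g₃⟩` meet
the conjugates of elements of `⟨ℓ₁⟩` only in the identity. -/
theorem stmt_16 :
    let g₁ : Perm (Fin 5) := c[1, 3] * c[2, 4]
    let g₂ : Perm (Fin 5) := c[0, 2, 3, 4, 1]
    let g₃ : Perm (Fin 5) := c[0, 1, 2, 3, 4]
    let h₁ : Perm (Fin 5) := c[2, 3, 4]
    let h₂ : Perm (Fin 5) := c[0, 4, 3, 2, 1]
    let ℓ₁ : Perm (Fin 5) := c[1, 2, 4]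
    g₁ * g₂ * g₃ = 1 ∧
    Subgroup.closure ({g₁, g₂, g₃} : Set (Perm (Fin 5))) = alternatingGroup (Fin 5) ∧
    ℓ₁ * ⁅h₁, h₂⁆ = 1 ∧
    Subgroup.closure ({ℓ₁, h₁, h₂} : Set (Perm (Fin 5))) = alternatingGroup (Fin 5) ∧
    ∀ x : Perm (Fin 5),
      (∃ k ∈ alternatingGroup (Fin 5), ∃ g ∈ ({g₁, g₂, g₃} : Set (Perm (Fin 5))),
        x ∈ Subgroup.zpowers (k * g * k⁻¹)) →
      (∃ k ∈ alternatingGroup (Fin 5), x ∈ Subgroup.zpowers (k * ℓ₁ * k⁻¹)) →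
      x = 1 := by
  intro g₁ g₂ g₃ h₁ h₂ ℓ₁
  have : Fact (Nat.Prime 5) := ⟨Nat.prime_five⟩
  refine ⟨by decide, ?_, by decide, ?_, ?_⟩
  · -- `g₂ g₃⁻¹ = (0 1 2)`
    refine closure_eq_alternatingGroup_five (x := g₂ * g₃⁻¹) (y := g₂) ?_
      (mul_mem (subset_closure (by simp)) (inv_mem (subset_closure (by simp))))
      (subset_closure (by simp)) (orderOf_eq_prime (by decide) (by decide))
      (orderOf_eq_prime (by decide) (by decide))
    rintro σ (rfl | rfl | rfl) <;> exact mem_alternatingGroup.mpr (by decide)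
  · refine closure_eq_alternatingGroup_five (x := ℓ₁) (y := h₂) ?_ (subset_closure (by simp))
      (subset_closure (by simp)) (orderOf_eq_prime (by decide) (by decide))
      (orderOf_eq_prime (by decide) (by decide))
    rintro σ (rfl | rfl | rfl) <;> exact mem_alternatingGroup.mpr (by decide)
  · rintro x ⟨k, -, g, hg, hxg⟩ ⟨k', -, hxℓ⟩
    have hg10 : g ^ 10 = 1 := by rcases hg with rfl | rfl | rfl <;> decide
    have hℓ3 : ℓ₁ ^ 3 = 1 := by decide
    refine eq_one_of_mem_zpowers_of_pow_eq_one_of_coprime (m := 10) (n := 3) ?_ ?_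
      (by decide) hxg hxℓ <;> simp [conj_pow, hg10, hℓ3]
end

section
/- In the dihedral group D₆ = ⟨ρ, σ | ρ⁶ = σ² = 1, ρσ = σρ⁵⟩ of order 12, the elements g₁ = ρ³, g₂ = ρσ, g₃ = ρ⁵σ, g₄ = ρ satisfy g₁g₂g₃g₄ = 1 and generate D₆; the elements ℓ₁ = ℓ₂ = σ, h₁ = h₂ = ρ satisfy ℓ₁ℓ₂[h₁,h₂] = 1 and generate D₆; and the union of all D₆-conjugates of ⟨g₁⟩ ∪ ⟨g₂⟩ ∪ ⟨g₃⟩ ∪ ⟨g₄⟩ meets the union of all D₆-conjugates of ⟨ℓ₁⟩ ∪ ⟨ℓ₂⟩ only in the identity. -/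
/-!
The relations are computations, and both generating sets contain `ρ` and `σ = ρ⁻¹ g₂`.

For the intersection: a conjugate `kσk⁻¹` is an involution, so it generates `{1, kσk⁻¹}`. A
homomorphism `χ` to an abelian group is constant on conjugacy classes, so if `χ gᵢ = 1 ≠ χ σ`
then `χ` kills `⟨kgᵢk⁻¹⟩` but not `kσk⁻¹`, and the two cyclic groups meet trivially. The
reflection parity is such a `χ` for the rotations `g₁, g₄`; its product with the index parity
`r i, sr i ↦ i mod 2` is one for the odd reflections `g₂ = sr 5`, `g₃ = sr 1`.
-/

open scoped commutatorElement

section Character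

variable {G A : Type*} [Group G] [CommGroup A]

theorem eq_one_of_mem_zpowers_of_map_eq_one (f : G →* A) {c x : G} (hc : c ^ 2 = 1)
    (hfc : f c ≠ 1) (hx : x ∈ Subgroup.zpowers c) (hfx : f x = 1) : x = 1 := by
  obtain ⟨k, rfl⟩ := Subgroup.mem_zpowers_iff.mp hx
  rw [zpow_eq_zpow_emod' k hc, Nat.cast_ofNat] at hfx ⊢
  rcases Int.emod_two_eq_zero_or_one k with h | h
  · rw [h, zpow_zero]
  · rw [h, zpow_one] at hfx
    exact absurd hfx hfc

theorem eq_one_of_mem_zpowers_conj_of_map (f : G →* A) {g s k k' x : G} (hg : f g = 1)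
    (hs : f s ≠ 1) (hs2 : s ^ 2 = 1) (hx : x ∈ Subgroup.zpowers (k * g * k⁻¹))
    (hx' : x ∈ Subgroup.zpowers (k' * s * k'⁻¹)) : x = 1 := by
  have hker : Subgroup.zpowers (k * g * k⁻¹) ≤ f.ker := by
    rw [Subgroup.zpowers_le, MonoidHom.mem_ker, map_mul, map_mul, hg, mul_one,
      map_inv, mul_inv_cancel]
  refine eq_one_of_mem_zpowers_of_map_eq_one f ?_ ?_ hx' (hker hx)
  · rw [conj_pow, hs2, mul_one, mul_inv_cancel]
  · rwa [map_mul, map_mul, map_inv, mul_inv_cancel_comm]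

end Character

namespace DihedralGroup

variable {n : ℕ}

theorem closure_sr_zero_r_one :
    Subgroup.closure ({sr 0, r 1} : Set (DihedralGroup n)) = ⊤ := by
  set H := Subgroup.closure ({sr 0, r 1} : Set (DihedralGroup n))
  have hr : ∀ i : ZMod n, r i ∈ H := fun i => by
    rw [← ZMod.intCast_zmod_cast i, ← r_one_zpow]
    exact zpow_mem (Subgroup.subset_closure (by simp)) _
  refine eq_top_iff.mpr fun x _ => ?_
  cases x with
  | r i => exact hr i
  | sr i =>
    rw [← zero_add i, ← sr_mul_r]
    exact mul_mem (Subgroup.subset_closure (by simp)) (hr i)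

def reflectionParity : DihedralGroup n →* Multiplicative (ZMod 2) where
  toFun
    | r _ => 1
    | sr _ => Multiplicative.ofAdd 1
  map_one' := rfl
  map_mul' := by
    rintro (i | i) (j | j) <;> simp only [r_mul_r, r_mul_sr, sr_mul_r, sr_mul_sr] <;> rfl

def indexParity (hn : 2 ∣ n) : DihedralGroup n →* Multiplicative (ZMod 2) where
  toFun
    | r i => Multiplicative.ofAdd (ZMod.castHom hn (ZMod 2) i)
    | sr i => Multiplicative.ofAdd (ZMod.castHom hn (ZMod 2) i)
  map_one' := by rw [one_def]; simp
  map_mul' := by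
    rintro (i | i) (j | j) <;>
      simp only [r_mul_r, r_mul_sr, sr_mul_r, sr_mul_sr, map_add, map_sub, CharTwo.sub_eq_add,
        ← ofAdd_add, add_comm]

end DihedralGroup

/-- Building data for the example `G = D₆` (dihedral of order 12),
`g(C) = 7`, `g(F) = 3`: with `ρ` the rotation of order 6 and `σ` a
reflection, `g₁ = ρ³`, `g₂ = ρσ`, `g₃ = ρ⁵σ`, `g₄ = ρ` satisfy
`g₁g₂g₃g₄ = 1` and generate `D₆`; `ℓ₁ = ℓ₂ = σ`, `h₁ = h₂ = ρ` satisfy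
`ℓ₁ℓ₂⁅h₁,h₂⁆ = 1` and generate `D₆`; and the union of all conjugates of the
`⟨gᵢ⟩` meets the union of all conjugates of `⟨σ⟩` only in the identity. -/
theorem stmt_18 :
    let ρ : DihedralGroup 6 := DihedralGroup.r 1
    let σ : DihedralGroup 6 := DihedralGroup.sr 0
    let g₁ := ρ ^ 3
    let g₂ := ρ * σ
    let g₃ := ρ ^ 5 * σ
    let g₄ := ρ
    g₁ * g₂ * g₃ * g₄ = 1 ∧
    Subgroup.closure ({g₁, g₂, g₃, g₄} : Set (DihedralGroup 6)) = ⊤ ∧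
    σ * σ * ⁅ρ, ρ⁆ = 1 ∧
    Subgroup.closure ({σ, ρ} : Set (DihedralGroup 6)) = ⊤ ∧
    ∀ x : DihedralGroup 6,
      (∃ (k g : DihedralGroup 6), g ∈ ({g₁, g₂, g₃, g₄} : Set (DihedralGroup 6)) ∧
        x ∈ Subgroup.zpowers (k * g * k⁻¹)) →
      (∃ k : DihedralGroup 6, x ∈ Subgroup.zpowers (k * σ * k⁻¹)) →
      x = 1 := by
  intro ρ σ g₁ g₂ g₃ g₄
  refine ⟨by decide, ?_, by decide, DihedralGroup.closure_sr_zero_r_one, ?_⟩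
  · have hρ : ρ ∈ Subgroup.closure ({g₁, g₂, g₃, g₄} : Set (DihedralGroup 6)) :=
      Subgroup.subset_closure (by simp [g₄])
    have hσ : σ ∈ Subgroup.closure ({g₁, g₂, g₃, g₄} : Set (DihedralGroup 6)) := by
      rw [show σ = ρ⁻¹ * g₂ by decide]
      exact mul_mem (inv_mem hρ) (Subgroup.subset_closure (by simp))
    rw [eq_top_iff, ← DihedralGroup.closure_sr_zero_r_one, Subgroup.closure_le]
    rintro y (rfl | rfl)
    exacts [hσ, hρ]
  · rintro x ⟨k, g, hg, hx⟩ ⟨k', hx'⟩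
    have hσ2 : σ ^ 2 = 1 := by decide
    rcases hg with rfl | rfl | rfl | rfl
    · exact eq_one_of_mem_zpowers_conj_of_map DihedralGroup.reflectionParity
        (by decide) (by decide) hσ2 hx hx'
    · exact eq_one_of_mem_zpowers_conj_of_map
        (DihedralGroup.reflectionParity * DihedralGroup.indexParity (by norm_num))
        (by decide) (by decide) hσ2 hx hx'
    · exact eq_one_of_mem_zpowers_conj_of_map
        (DihedralGroup.reflectionParity * DihedralGroup.indexParity (by norm_num))
        (by decide) (by decide) hσ2 hx hx'
    · exact eq_one_of_mem_zpowers_conj_of_map DihedralGroup.reflectionParity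
        (by decide) (by decide) hσ2 hx hx'
end
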